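/- If (X, d) is a compact strictly quasihypermetric space, then there exists at most one maximal measure in M₁(X): if μ, ν ∈ M₁(X) satisfy I(μ) = I(ν) = M(X) < ∞, then μ = ν. -/

import Mathlib

open MeasureTheory

/-- Integral of a function against a finite signed Borel measure, via Jordan decomposition. -/
noncomputable def sInt {X : Type*} [MeasurableSpace X] (μ : SignedMeasure X) (f : X → ℝ) : ℝ :=
  (∫ x, f x ∂μ.toJordanDecomposition.posPart) - ∫ x, f x ∂μ.toJordanDecomposition.negPart

/-- Energy `I(μ, ν) = ∫∫ d(x,y) dμ(x) dν(y)` with respect to a kernel `d`. -/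
noncomputable def en {X : Type*} [MeasurableSpace X] (d : X → X → ℝ)
    (μ ν : SignedMeasure X) : ℝ :=
  sInt μ (fun x => sInt ν (fun y => d x y))

/-- The potential `d_μ(x) = ∫ d(x,y) dμ(y)`. -/
noncomputable def dPot {X : Type*} [MeasurableSpace X] (d : X → X → ℝ)
    (μ : SignedMeasure X) (x : X) : ℝ :=
  sInt μ (fun y => d x y)

/-- The set of energies `I(μ)` of signed Borel measures of total mass one. -/
noncomputable def MSet (X : Type*) [MetricSpace X] [MeasurableSpace X] : Set ℝ :=
  {r | ∃ μ : SignedMeasure X, μ Set.univ = (1 : ℝ) ∧ en (fun x y => dist x y) μ μ = r}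

/-!
For a continuous kernel on a compact space the energy `I` is a quadratic form on signed
measures, so it satisfies the parallelogram law
`I(μ - ν) + 4 I((μ + ν)/2) = 2 I(μ) + 2 I(ν)`.
If `I(μ) = I(ν) = M(X)`, the mass-one measure `(μ + ν)/2` has energy at most `M(X)`, hence
`I(μ - ν) ≥ 0`. As `μ - ν` has mass zero, strict quasihypermetricity forces `I(μ - ν) = 0`
and then `μ = ν`.
-/

theorem MeasureTheory.SignedMeasure.eq_posPart_sub_negPart {X : Type*} [MeasurableSpace X]
    (μ : SignedMeasure X) :
    μ = μ.toJordanDecomposition.posPart.toSignedMeasure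
      - μ.toJordanDecomposition.negPart.toSignedMeasure :=
  μ.toSignedMeasure_toJordanDecomposition.symm

theorem sInt_fun_const_mul {X : Type*} [MeasurableSpace X] (μ : SignedMeasure X) (c : ℝ)
    (f : X → ℝ) : sInt μ (fun x => c * f x) = c * sInt μ f := by
  simp only [sInt, integral_const_mul]
  ring

section Continuous

variable {X : Type*} [TopologicalSpace X] [CompactSpace X] [MeasurableSpace X]
  [OpensMeasurableSpace X]

theorem Continuous.integrable_of_compactSpace {f : X → ℝ} (hf : Continuous f)
    (P : Measure X) [IsFiniteMeasure P] : Integrable f P :=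
  hf.integrable_of_hasCompactSupport (HasCompactSupport.of_compactSpace f)

theorem sInt_eq_of_eq_sub {μ : SignedMeasure X} {P N : Measure X} [IsFiniteMeasure P]
    [IsFiniteMeasure N] (h : μ = P.toSignedMeasure - N.toSignedMeasure) {f : X → ℝ}
    (hf : Continuous f) : sInt μ f = (∫ x, f x ∂P) - ∫ x, f x ∂N := by
  set p := μ.toJordanDecomposition.posPart
  set n := μ.toJordanDecomposition.negPart
  have hpn : p.toSignedMeasure - n.toSignedMeasure = P.toSignedMeasure - N.toSignedMeasure := by
    rw [← h]
    exact μ.toSignedMeasure_toJordanDecomposition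
  have hmeas : p + N = n + P := by
    rw [← Measure.toSignedMeasure_eq_toSignedMeasure_iff, Measure.toSignedMeasure_add,
      Measure.toSignedMeasure_add]
    rw [sub_eq_sub_iff_add_eq_add] at hpn
    rw [hpn, add_comm]
  have hint := congrArg (fun Q => ∫ x, f x ∂Q) hmeas
  simp only [integral_add_measure (hf.integrable_of_compactSpace _)
    (hf.integrable_of_compactSpace _)] at hint
  simp only [sInt, p, n] at hint ⊢
  linarith

theorem sInt_add (μ ν : SignedMeasure X) {f : X → ℝ} (hf : Continuous f) :
    sInt (μ + ν) f = sInt μ f + sInt ν f := by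
  have h : μ + ν =
      (μ.toJordanDecomposition.posPart + ν.toJordanDecomposition.posPart).toSignedMeasure -
        (μ.toJordanDecomposition.negPart + ν.toJordanDecomposition.negPart).toSignedMeasure := by
    rw [Measure.toSignedMeasure_add, Measure.toSignedMeasure_add]
    nth_rewrite 1 [μ.eq_posPart_sub_negPart, ν.eq_posPart_sub_negPart]
    abel
  rw [sInt_eq_of_eq_sub h hf, integral_add_measure (hf.integrable_of_compactSpace _)
    (hf.integrable_of_compactSpace _), integral_add_measure (hf.integrable_of_compactSpace _)
    (hf.integrable_of_compactSpace _), sInt, sInt]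
  ring

theorem sInt_neg (μ : SignedMeasure X) {f : X → ℝ} (hf : Continuous f) :
    sInt (-μ) f = -sInt μ f := by
  have h : -μ = μ.toJordanDecomposition.negPart.toSignedMeasure
      - μ.toJordanDecomposition.posPart.toSignedMeasure := by
    nth_rewrite 1 [μ.eq_posPart_sub_negPart]
    abel
  rw [sInt_eq_of_eq_sub h hf, sInt]
  ring

theorem sInt_sub (μ ν : SignedMeasure X) {f : X → ℝ} (hf : Continuous f) :
    sInt (μ - ν) f = sInt μ f - sInt ν f := by
  rw [sub_eq_add_neg, sInt_add _ _ hf, sInt_neg _ hf, sub_eq_add_neg]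

theorem sInt_smul_of_nonneg {c : ℝ} (hc : 0 ≤ c) (μ : SignedMeasure X) {f : X → ℝ}
    (hf : Continuous f) : sInt (c • μ) f = c * sInt μ f := by
  have h : c • μ = (c.toNNReal • μ.toJordanDecomposition.posPart).toSignedMeasure
      - (c.toNNReal • μ.toJordanDecomposition.negPart).toSignedMeasure := by
    rw [Measure.toSignedMeasure_smul, Measure.toSignedMeasure_smul]
    nth_rewrite 1 [μ.eq_posPart_sub_negPart]
    rw [smul_sub]
    congr 1 <;> rw [NNReal.smul_def, Real.coe_toNNReal _ hc]
  rw [sInt_eq_of_eq_sub h hf, integral_smul_nnreal_measure, integral_smul_nnreal_measure, sInt,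
    NNReal.smul_def, NNReal.smul_def, Real.coe_toNNReal _ hc, smul_eq_mul, smul_eq_mul]
  ring

theorem sInt_smul (c : ℝ) (μ : SignedMeasure X) {f : X → ℝ} (hf : Continuous f) :
    sInt (c • μ) f = c * sInt μ f := by
  rcases le_total 0 c with hc | hc
  · exact sInt_smul_of_nonneg hc μ hf
  · have h : c • μ = -((-c) • μ) := by ext i; simp
    rw [h, sInt_neg _ hf, sInt_smul_of_nonneg (neg_nonneg.mpr hc) μ hf]
    ring

theorem sInt_fun_add (μ : SignedMeasure X) {f g : X → ℝ} (hf : Continuous f)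
    (hg : Continuous g) : sInt μ (fun x => f x + g x) = sInt μ f + sInt μ g := by
  simp only [sInt]
  rw [integral_add (hf.integrable_of_compactSpace _) (hg.integrable_of_compactSpace _),
    integral_add (hf.integrable_of_compactSpace _) (hg.integrable_of_compactSpace _)]
  ring

theorem sInt_fun_sub (μ : SignedMeasure X) {f g : X → ℝ} (hf : Continuous f)
    (hg : Continuous g) : sInt μ (fun x => f x - g x) = sInt μ f - sInt μ g := by
  simp only [sInt]
  rw [integral_sub (hf.integrable_of_compactSpace _) (hg.integrable_of_compactSpace _),
    integral_sub (hf.integrable_of_compactSpace _) (hg.integrable_of_compactSpace _)]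
  ring

end Continuous

section Energy

variable {X : Type*} [TopologicalSpace X] [CompactSpace X] [MeasurableSpace X]
  [OpensMeasurableSpace X] {d : X → X → ℝ}

theorem en_smul_right (hd : Continuous (Function.uncurry d)) (c : ℝ) (μ ν : SignedMeasure X) :
    en d μ (c • ν) = c * en d μ ν := by
  simp only [en, sInt_smul c ν (hd.uncurry_left _)]
  exact sInt_fun_const_mul μ c _

variable [T2Space X] [FirstCountableTopology X]

theorem continuous_dPot (hd : Continuous (Function.uncurry d)) (ν : SignedMeasure X) :
    Continuous (dPot d ν) := by
  have hint : ∀ P : Measure X, [IsFiniteMeasure P] → Continuous fun x => ∫ y, d x y ∂P := by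
    intro P _
    simpa only [Measure.restrict_univ] using
      continuous_parametric_integral_of_continuous (μ := P) hd isCompact_univ
  exact (hint _).sub (hint _)

theorem en_add_left (hd : Continuous (Function.uncurry d)) (μ₁ μ₂ ν : SignedMeasure X) :
    en d (μ₁ + μ₂) ν = en d μ₁ ν + en d μ₂ ν :=
  sInt_add μ₁ μ₂ (continuous_dPot hd ν)

theorem en_sub_left (hd : Continuous (Function.uncurry d)) (μ₁ μ₂ ν : SignedMeasure X) :
    en d (μ₁ - μ₂) ν = en d μ₁ ν - en d μ₂ ν :=
  sInt_sub μ₁ μ₂ (continuous_dPot hd ν)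

theorem en_smul_left (hd : Continuous (Function.uncurry d)) (c : ℝ) (μ ν : SignedMeasure X) :
    en d (c • μ) ν = c * en d μ ν :=
  sInt_smul c μ (continuous_dPot hd ν)

theorem en_add_right (hd : Continuous (Function.uncurry d)) (μ ν₁ ν₂ : SignedMeasure X) :
    en d μ (ν₁ + ν₂) = en d μ ν₁ + en d μ ν₂ := by
  simp only [en, sInt_add ν₁ ν₂ (hd.uncurry_left _)]
  exact sInt_fun_add μ (continuous_dPot hd ν₁) (continuous_dPot hd ν₂)

theorem en_sub_right (hd : Continuous (Function.uncurry d)) (μ ν₁ ν₂ : SignedMeasure X) :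
    en d μ (ν₁ - ν₂) = en d μ ν₁ - en d μ ν₂ := by
  simp only [en, sInt_sub ν₁ ν₂ (hd.uncurry_left _)]
  exact sInt_fun_sub μ (continuous_dPot hd ν₁) (continuous_dPot hd ν₂)

theorem en_smul_smul (hd : Continuous (Function.uncurry d)) (c : ℝ) (μ : SignedMeasure X) :
    en d (c • μ) (c • μ) = c ^ 2 * en d μ μ := by
  rw [en_smul_left hd, en_smul_right hd]
  ring

theorem en_parallelogram (hd : Continuous (Function.uncurry d)) (μ ν : SignedMeasure X) :
    en d (μ + ν) (μ + ν) + en d (μ - ν) (μ - ν) = 2 * (en d μ μ + en d ν ν) := by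
  simp only [en_add_left hd, en_add_right hd, en_sub_left hd, en_sub_right hd]
  ring

end Energy

/-- In a compact strictly quasihypermetric space there is at most one maximal measure. -/
theorem stmt2 {X : Type*} [MetricSpace X] [CompactSpace X] [MeasurableSpace X] [BorelSpace X]
    (hq : ∀ φ : SignedMeasure X, φ Set.univ = (0 : ℝ) →
      en (fun x y => dist x y) φ φ ≤ 0 ∧ (en (fun x y => dist x y) φ φ = 0 → φ = 0))
    (μ ν : SignedMeasure X) (hμ : μ Set.univ = (1 : ℝ)) (hν : ν Set.univ = (1 : ℝ))
    (m : ℝ) (hm : IsLUB (MSet X) m)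
    (h1 : en (fun x y => dist x y) μ μ = m) (h2 : en (fun x y => dist x y) ν ν = m) :
    μ = ν := by
  have hd : Continuous (Function.uncurry fun x y : X => dist x y) := continuous_dist
  have hdiff : (μ - ν) Set.univ = (0 : ℝ) := by simp [hμ, hν]
  have hmid : ((2⁻¹ : ℝ) • (μ + ν)) Set.univ = (1 : ℝ) := by norm_num [hμ, hν]
  have hmid_le : (2⁻¹ : ℝ) ^ 2 * en (fun x y => dist x y) (μ + ν) (μ + ν) ≤ m := by
    rw [← en_smul_smul hd]
    exact hm.1 ⟨_, hmid, rfl⟩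
  have hpar := en_parallelogram hd μ ν
  have hzero : en (fun x y => dist x y) (μ - ν) (μ - ν) = 0 :=
    le_antisymm (hq _ hdiff).1 (by linarith)
  exact sub_eq_zero.mp ((hq _ hdiff).2 hzero)
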